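/- arXiv:cs/0407020 — 6 statements merged into one kernel-verified Lean document; each statement's English description precedes it below -/
import Mathlib

section
/- Let C and C_OPT be points in ℝ^d with d = dist(C, C_OPT) ≤ 2, and let P be a point with dist(C_OPT, P) = 1 such that the angle ∠C C_OPT P is at least π/2 (i.e., ⟨C - C_OPT, P - C_OPT⟩ ≤ 0). Then dist(C, P) ≥ 1 + d²/4. -/
/-! Since the angle at `C_OPT` is not acute, the law of cosines gives `dist C P ≥ √(1 + d²)`,
and `√(1 + t²) ≥ 1 + t²/4` as long as `t² ≤ 8`, because squaring leaves `t⁴/16 ≤ t²/2`. -/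

open RealInnerProductSpace

theorem dist_sq_add_dist_sq_le_of_inner_nonpos {E : Type*} [NormedAddCommGroup E]
    [InnerProductSpace ℝ E] {x y z : E} (h : ⟪x - z, y - z⟫ ≤ 0) :
    dist x z ^ 2 + dist z y ^ 2 ≤ dist x y ^ 2 := by
  have hcos : dist x y ^ 2 = dist x z ^ 2 + dist z y ^ 2 - 2 * ⟪x - z, y - z⟫ := by
    rw [dist_eq_norm, dist_eq_norm, dist_eq_norm, norm_sub_rev z y,
      ← sub_sub_sub_cancel_right x y z, norm_sub_sq_real]
    ring
  linarith

theorem Real.one_add_sq_div_four_le_sqrt_one_add_sq {t : ℝ} (ht : t ^ 2 ≤ 8) :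
    1 + t ^ 2 / 4 ≤ √(1 + t ^ 2) :=
  Real.le_sqrt_of_sq_le (by nlinarith [sq_nonneg t])

theorem far_point_dist (d : ℕ) (C COPT P : EuclideanSpace ℝ (Fin d))
    (hd : dist C COPT ≤ 2) (hP : dist COPT P = 1)
    (hangle : (inner ℝ (C - COPT) (P - COPT) : ℝ) ≤ 0) :
    dist C P ≥ 1 + (dist C COPT) ^ 2 / 4 := by
  have hsq : dist C COPT ^ 2 ≤ 8 := by nlinarith [dist_nonneg (x := C) (y := COPT)]
  have hfar : 1 + dist C COPT ^ 2 ≤ dist C P ^ 2 := by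
    have := dist_sq_add_dist_sq_le_of_inner_nonpos hangle
    rw [hP] at this
    linarith
  calc 1 + dist C COPT ^ 2 / 4 ≤ √(1 + dist C COPT ^ 2) :=
        Real.one_add_sq_div_four_le_sqrt_one_add_sq hsq
    _ ≤ √(dist C P ^ 2) := Real.sqrt_le_sqrt hfar
    _ = dist C P := Real.sqrt_sq dist_nonneg
end

section
/- Let S be a finite nonempty set of points in ℝ^d, and let B(C_OPT, r) be a minimum enclosing ball of S (the ball of smallest radius containing S). Then for any point C ≠ C_OPT, there exists a point P ∈ S with ⟨C - C_OPT, P - C_OPT⟩ ≤ 0, i.e., P lies on the closed hemisphere of the enclosing ball facing away from C. -/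
/-!
If every point of `S` satisfied `⟪C - C_OPT, P - C_OPT⟫ > 0`, then moving the center a little
from `C_OPT` towards `C` would bring it strictly closer to each point of `S`. Since `S` is finite,
a strictly smaller radius would then still enclose `S`, contradicting minimality.
-/

open Filter Topology

section

variable {E : Type*} [NormedAddCommGroup E] [InnerProductSpace ℝ E]

theorem dist_add_smul_lt_dist {c P v : E} {t : ℝ} (ht : 0 < t)
    (htv : t * ‖v‖ ^ 2 < 2 * inner ℝ v (P - c)) : dist (c + t • v) P < dist c P := by
  have hsq : dist (c + t • v) P ^ 2 = dist c P ^ 2 + t * (t * ‖v‖ ^ 2 - 2 * inner ℝ v (P - c)) := by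
    rw [dist_eq_norm, dist_eq_norm, show c + t • v - P = (c - P) + t • v by abel,
      norm_add_sq_real, real_inner_smul_right, norm_smul, mul_pow, Real.norm_eq_abs, sq_abs,
      real_inner_comm, ← neg_sub P c, inner_neg_right]
    ring
  have hdecr : dist (c + t • v) P ^ 2 < dist c P ^ 2 := by
    rw [hsq]
    linarith [mul_neg_of_pos_of_neg ht (sub_neg.2 htv)]
  exact (pow_lt_pow_iff_left₀ dist_nonneg dist_nonneg two_ne_zero).1 hdecr

theorem exists_forall_dist_lt_of_forall_inner_pos (S : Finset E) {c v : E}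
    (hS : ∀ P ∈ S, 0 < inner ℝ v (P - c)) : ∃ c' : E, ∀ P ∈ S, dist c' P < dist c P := by
  have hsmall : ∀ P ∈ S, ∀ᶠ t in 𝓝[>] (0 : ℝ), t * ‖v‖ ^ 2 < 2 * inner ℝ v (P - c) := by
    intro P hP
    have hlim : Tendsto (fun t : ℝ => t * ‖v‖ ^ 2) (𝓝[>] 0) (𝓝 0) :=
      tendsto_nhdsWithin_of_tendsto_nhds <|
        (continuous_id.mul continuous_const).tendsto' 0 0 (zero_mul _)
    exact hlim.eventually_lt_const (by linarith [hS P hP])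
  obtain ⟨t, ht, htS⟩ :=
    (eventually_mem_nhdsWithin.and (S.eventually_all.2 hsmall) : ∀ᶠ t in 𝓝[>] (0 : ℝ), _).exists
  exact ⟨c + t • v, fun P hP => dist_add_smul_lt_dist ht (htS P hP)⟩

end

theorem hemisphere_point_exists_general (d : ℕ) (S : Finset (EuclideanSpace ℝ (Fin d)))
    (COPT : EuclideanSpace ℝ (Fin d)) (r : ℝ)
    (hcov : ∀ P ∈ S, dist COPT P ≤ r)
    (hmin : ∀ (C' : EuclideanSpace ℝ (Fin d)) (r' : ℝ),
      (∀ P ∈ S, dist C' P ≤ r') → r ≤ r')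
    (C : EuclideanSpace ℝ (Fin d)) :
    ∃ P ∈ S, (inner ℝ (C - COPT) (P - COPT) : ℝ) ≤ 0 := by
  by_contra! hpos
  obtain ⟨C', hcloser⟩ := exists_forall_dist_lt_of_forall_inner_pos S hpos
  obtain ⟨r', hbelow, hr'r⟩ := Order.exists_between_finsets (S.image (dist C')) {r} <| by
    simpa using fun P hP => (hcloser P hP).trans_le (hcov P hP)
  have hcov' : ∀ P ∈ S, dist C' P ≤ r' := fun P hP => (hbelow _ (S.mem_image_of_mem _ hP)).le
  exact (hmin C' r' hcov').not_gt (hr'r r (Finset.mem_singleton_self r))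

theorem hemisphere_point_exists (d : ℕ) (S : Finset (EuclideanSpace ℝ (Fin d)))
    (hS : S.Nonempty) (COPT : EuclideanSpace ℝ (Fin d)) (r : ℝ)
    (hcov : ∀ P ∈ S, dist COPT P ≤ r)
    (hmin : ∀ (C' : EuclideanSpace ℝ (Fin d)) (r' : ℝ),
      (∀ P ∈ S, dist C' P ≤ r') → r ≤ r')
    (C : EuclideanSpace ℝ (Fin d)) (hC : C ≠ COPT) :
    ∃ P ∈ S, (inner ℝ (C - COPT) (P - COPT) : ℝ) ≤ 0 :=
  hemisphere_point_exists_general d S COPT r hcov hmin C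
end

section
/- Suppose the minimum enclosing ball of a finite set S ⊆ ℝ^d has radius 1 and center C_OPT, with all pairwise distances in S ∪ {C_OPT} bounded so that any candidate center C considered satisfies dist(C, C_OPT) ≤ 2. If C is a point with dist(C, C_OPT) = δ, then there exists a point P ∈ S whose distance from C is at least 1 + δ²/4, i.e., P is at least δ²/4 outside the surface of the unit ball centered at C. -/
open scoped RealInnerProductSpace

set_option maxHeartbeats 1000000

private lemma goodh_aux_far (t δ ip nq a : ℝ) (ht0 : 0 < t) (ht1 : t < 1)
    (ht2 : t * (2*δ+δ^2) < a) (ha : a = 1 - (1-δ^2/4)^2) (hip : ip ≤ 0)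
    (hipge : -δ ≤ ip) (hq : nq^2 - 2*ip + δ^2 < (1+δ^2/4)^2) (hδ : 0 < δ) :
    t^2*δ^2 - 2*t*ip + nq^2 < 1 := by
  have hqsq : nq^2 < (1 - δ^2/4)^2 := by nlinarith
  nlinarith [mul_nonneg (mul_nonneg (sub_nonneg.mpr ht1.le) ht0.le) (sq_nonneg δ),
    mul_le_mul_of_nonneg_left hipge ht0.le]

private lemma goodh_aux_near (t δ ip nq : ℝ) (ht0 : 0 < t) (ht2 : t*δ^2 < 2*ip)
    (hnq0 : 0 ≤ nq) (hnq : nq ≤ 1) :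
    t^2*δ^2 - 2*t*ip + nq^2 < 1 := by
  nlinarith [mul_pos ht0 (sub_pos.mpr ht2)]

theorem goodh (d : ℕ) (S : Finset (EuclideanSpace ℝ (Fin d)))
    (hS : S.Nonempty) (COPT : EuclideanSpace ℝ (Fin d))
    (hcov : ∀ P ∈ S, dist COPT P ≤ 1)
    (hmin : ∀ (C' : EuclideanSpace ℝ (Fin d)) (r' : ℝ),
      (∀ P ∈ S, dist C' P ≤ r') → 1 ≤ r')
    (C : EuclideanSpace ℝ (Fin d)) (δ : ℝ)
    (hδ : dist C COPT = δ) (hδ2 : δ ≤ 2) :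
    ∃ P ∈ S, dist C P ≥ 1 + δ ^ 2 / 4 := by
  by_contra hcon
  push_neg at hcon
  have hδ0 : 0 ≤ δ := hδ ▸ dist_nonneg
  have key : ∀ (C' : EuclideanSpace ℝ (Fin d)), (∀ P ∈ S, dist C' P < 1) → False := by
    intro C' hlt
    have h1 : (1:ℝ) ≤ S.sup' hS (fun P => dist C' P) :=
      hmin _ _ (fun P hP => Finset.le_sup' _ hP)
    have h2 : S.sup' hS (fun P => dist C' P) < 1 := (Finset.sup'_lt_iff hS).mpr hlt
    linarith
  rcases eq_or_lt_of_le hδ0 with h0 | hpos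
  · apply key COPT
    intro P hP
    have h1 := hcon P hP
    have hC : C = COPT := dist_eq_zero.mp (by rw [hδ, ← h0])
    rw [← hC]
    calc dist C P < 1 + δ^2/4 := h1
    _ = 1 := by rw [← h0]; ring
  · set u : EuclideanSpace ℝ (Fin d) := C - COPT with hu_def
    have hu : ‖u‖ = δ := by rw [← hδ, dist_eq_norm]
    set a : ℝ := 1 - (1 - δ^2/4)^2 with ha_def
    have ha : 0 < a := by
      have h4 : δ^2 ≤ 4 := by nlinarith
      have h5 : 0 < δ^2 := by positivity
      rw [ha_def]
      nlinarith [mul_pos h5 (show (0:ℝ) < 8 - δ^2 by linarith)]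
    have hden : (0:ℝ) < 2*δ + δ^2 := by positivity
    have hδsq : (0:ℝ) < δ^2 := by positivity
    -- the threshold function
    classical
    set τ : EuclideanSpace ℝ (Fin d) → ℝ := fun P =>
      if ⟪(P - COPT : EuclideanSpace ℝ (Fin d)), u⟫ ≤ 0 then min 1 (a/(2*δ+δ^2))
      else min 1 (2*⟪(P - COPT : EuclideanSpace ℝ (Fin d)), u⟫/δ^2) with hτ_def
    have hτpos : ∀ P ∈ S, 0 < τ P := by
      intro P _
      by_cases hip : ⟪(P - COPT : EuclideanSpace ℝ (Fin d)), u⟫ ≤ 0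
      · simp only [hτ_def, if_pos hip]
        exact lt_min one_pos (div_pos ha hden)
      · simp only [hτ_def, if_neg hip]
        push_neg at hip
        exact lt_min one_pos (div_pos (by linarith) hδsq)
    obtain ⟨t, ht0, htτ⟩ : ∃ t : ℝ, 0 < t ∧ ∀ P ∈ S, t < τ P := by
      refine ⟨S.inf' hS τ / 2, ?_, ?_⟩
      · obtain ⟨P0, hP0, hP0eq⟩ := Finset.exists_mem_eq_inf' hS τ
        have := hτpos P0 hP0
        rw [hP0eq] at *
        linarith
      · intro P hP
        have h1 : S.inf' hS τ ≤ τ P := Finset.inf'_le _ hP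
        have := hτpos P hP
        linarith
    -- extract the scalar consequences per point, then forget τ
    have htkey : ∀ P ∈ S, t < 1 ∧
        ((⟪(P - COPT : EuclideanSpace ℝ (Fin d)), u⟫ ≤ 0 →
          t * (2*δ+δ^2) < a) ∧
         (0 < ⟪(P - COPT : EuclideanSpace ℝ (Fin d)), u⟫ →
          t * δ^2 < 2*⟪(P - COPT : EuclideanSpace ℝ (Fin d)), u⟫)) := by
      intro P hP
      have h := htτ P hP
      simp only [hτ_def] at h
      by_cases hip : ⟪(P - COPT : EuclideanSpace ℝ (Fin d)), u⟫ ≤ 0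
      · rw [if_pos hip, lt_min_iff] at h
        refine ⟨h.1, fun _ => ?_, fun hc => absurd hip (not_le.mpr hc)⟩
        exact (lt_div_iff₀ hden).mp h.2
      · rw [if_neg hip, lt_min_iff] at h
        refine ⟨h.1, fun hc => absurd hc hip, fun _ => ?_⟩
        exact (lt_div_iff₀ hδsq).mp h.2
    clear htτ hτpos hτ_def
    apply key (COPT + t • u)
    intro P hP
    obtain ⟨ht1, hfar, hnear⟩ := htkey P hP
    set q : EuclideanSpace ℝ (Fin d) := P - COPT with hq_def
    have hq1 : ‖q‖ ≤ 1 := by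
      rw [hq_def, ← norm_sub_rev, ← dist_eq_norm]; exact hcov P hP
    set ip : ℝ := ⟪q, u⟫ with hip_def
    have hdist' : dist (COPT + t • u) P = ‖t • u - q‖ := by
      rw [dist_eq_norm]
      congr 1
      rw [hq_def]
      abel
    have hsq : ‖t • u - q‖^2 = t^2 * δ^2 - 2 * t * ip + ‖q‖^2 := by
      rw [norm_sub_sq_real, norm_smul, real_inner_smul_left, hu, hip_def,
        real_inner_comm, Real.norm_eq_abs, abs_of_pos ht0]
      ring
    have hdC : dist C P = ‖u - q‖ := by
      rw [dist_eq_norm]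
      congr 1
      rw [hu_def, hq_def]
      try abel
    have hdCsq : ‖u - q‖^2 = δ^2 - 2 * ip + ‖q‖^2 := by
      rw [norm_sub_sq_real, hu, hip_def, real_inner_comm]
      try ring
    have hdCbound : ‖q‖^2 - 2 * ip + δ^2 < (1 + δ^2/4)^2 := by
      have h1 := hcon P hP
      rw [hdC] at h1
      have h2 : (0:ℝ) ≤ ‖u - q‖ := norm_nonneg _
      nlinarith
    have habs : |ip| ≤ δ := by
      have h1 := abs_real_inner_le_norm q u
      rw [hu] at h1
      have hq0 : (0:ℝ) ≤ ‖q‖ := norm_nonneg _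
      calc |ip| ≤ ‖q‖ * δ := h1
        _ ≤ 1 * δ := by nlinarith
        _ = δ := one_mul δ
    have hgoal : ‖t • u - q‖^2 < 1 := by
      rw [hsq]
      by_cases hip : ip ≤ 0
      · exact goodh_aux_far t δ ip ‖q‖ a ht0 ht1 (hfar hip) ha_def hip
          (abs_le.mp habs).1 hdCbound hpos
      · push_neg at hip
        exact goodh_aux_near t δ ip ‖q‖ ht0 (hnear hip) (norm_nonneg q) hq1
    rw [hdist']
    have h0 : (0:ℝ) ≤ ‖t • u - q‖ := norm_nonneg _
    nlinarith
end

section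
/- Let K ⊆ ℝ^d be a nonempty closed convex set, let v ∈ ℝ^d be a translation vector (so that K + v is the 'optimal' position), let P ∈ K + v with dist(P, K) ≥ ε, and let Q be the closest point of K to P. If the polytope K is translated by P - Q (so the new translation offset from optimal is v - (P - Q)), then ‖v - (P - Q)‖² ≤ ‖v‖² - ε². -/
/-!
Write `P = P' + v` with `P' ∈ K`. Then `v - (P - Q) = Q - P'`, and since `Q` is the projection
of `P` onto `K`, the angle at `Q` between `P - Q` and `P' - Q` is obtuse. Hence in the
decomposition `v = (P - Q) + (Q - P')` the cross term is nonnegative, so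
`‖Q - P'‖² ≤ ‖v‖² - ‖P - Q‖²`, and `‖P - Q‖ = dist(P, K) ≥ ε`.
-/

open RealInnerProductSpace

section

variable {F : Type*} [NormedAddCommGroup F] [InnerProductSpace ℝ F]

theorem real_inner_sub_nonpos_of_forall_dist_le {K : Set F} (hK : Convex ℝ K) {p q : F}
    (hq : q ∈ K) (hmin : ∀ y ∈ K, dist p q ≤ dist p y) : ∀ y ∈ K, ⟪p - q, y - q⟫ ≤ 0 := by
  have : Nonempty K := ⟨⟨q, hq⟩⟩
  have hinf : ‖p - q‖ = ⨅ w : K, ‖p - w‖ :=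
    le_antisymm (le_ciInf fun w => by simpa only [dist_eq_norm] using hmin w w.2)
      (ciInf_le ⟨0, Set.forall_mem_range.2 fun _ => norm_nonneg _⟩ (⟨q, hq⟩ : K))
  exact (norm_eq_iInf_iff_real_inner_le_zero hK hq).mp hinf

theorem norm_sub_sq_le_of_inner_sub_nonneg {u v : F} (h : 0 ≤ ⟪u, v - u⟫) :
    ‖v - u‖ ^ 2 ≤ ‖v‖ ^ 2 - ‖u‖ ^ 2 := by
  have hv : ‖v‖ ^ 2 = ‖u‖ ^ 2 + 2 * ⟪u, v - u⟫ + ‖v - u‖ ^ 2 := by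
    rw [← norm_add_sq_real, add_sub_cancel]
  linarith

end

theorem mincon_progress_general (d : ℕ) (K : Set (EuclideanSpace ℝ (Fin d)))
    (hKconv : Convex ℝ K)
    (v : EuclideanSpace ℝ (Fin d)) (P : EuclideanSpace ℝ (Fin d))
    (hP : P ∈ (fun x => x + v) '' K) (ε : ℝ) (hε : 0 ≤ ε)
    (hfar : ε ≤ Metric.infDist P K)
    (Q : EuclideanSpace ℝ (Fin d)) (hQ : Q ∈ K)
    (hQmin : ∀ y ∈ K, dist P Q ≤ dist P y) :
    ‖v - (P - Q)‖ ^ 2 ≤ ‖v‖ ^ 2 - ε ^ 2 := by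
  obtain ⟨P', hP', rfl⟩ := hP
  have hobtuse : ⟪P' + v - Q, P' - Q⟫ ≤ 0 :=
    real_inner_sub_nonpos_of_forall_dist_le hKconv hQ hQmin P' hP'
  have hshift : v - (P' + v - Q) = -(P' - Q) := by abel
  have hcross : 0 ≤ ⟪P' + v - Q, v - (P' + v - Q)⟫ := by
    rw [hshift, inner_neg_right]
    exact neg_nonneg.mpr hobtuse
  have hεQ : ε ≤ ‖P' + v - Q‖ :=
    hfar.trans ((Metric.infDist_le_dist_of_mem hQ).trans_eq (dist_eq_norm _ _))
  have hε2 : ε ^ 2 ≤ ‖P' + v - Q‖ ^ 2 := pow_le_pow_left₀ hε hεQ 2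
  linarith [norm_sub_sq_le_of_inner_sub_nonneg hcross]

theorem mincon_progress (d : ℕ) (K : Set (EuclideanSpace ℝ (Fin d)))
    (hK : K.Nonempty) (hKc : IsClosed K) (hKconv : Convex ℝ K)
    (v : EuclideanSpace ℝ (Fin d)) (P : EuclideanSpace ℝ (Fin d))
    (hP : P ∈ (fun x => x + v) '' K) (ε : ℝ) (hε : 0 ≤ ε)
    (hfar : ε ≤ Metric.infDist P K)
    (Q : EuclideanSpace ℝ (Fin d)) (hQ : Q ∈ K)
    (hQmin : ∀ y ∈ K, dist P Q ≤ dist P y) :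
    ‖v - (P - Q)‖ ^ 2 ≤ ‖v‖ ^ 2 - ε ^ 2 :=
  mincon_progress_general d K hKconv v P hP ε hε hfar Q hQ hQmin
end

section
/- Let K ⊆ ℝ^d be closed convex, v ∈ ℝ^d with ‖v‖ ≤ 1, and ε > 0, and let w be a fixed unknown vector such that K + w is the optimal polytope. Define a sequence of translation offsets starting with v_0 = v, and whenever there is a point P_i in K + w at distance ≥ ε from the current translate of K, update per the MINCON rule so that ‖v_{i+1}‖² ≤ ‖v_i‖² - ε². Then after at most ⌈1/ε²⌉ iterations, every point of the optimal polytope K + w is within distance ε of the current translate of K. -/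
theorem mincon_termination (d : ℕ) (K : Set (EuclideanSpace ℝ (Fin d)))
    (hKc : IsClosed K) (hKconv : Convex ℝ K)
    (w : EuclideanSpace ℝ (Fin d)) (ε : ℝ) (hε : 0 < ε)
    (v : ℕ → EuclideanSpace ℝ (Fin d)) (hv0 : ‖v 0‖ ≤ 1)
    (hstep : ∀ i, (∃ P ∈ (fun x => w + x) '' K, ε ≤ Metric.infDist P ((fun x => (w - v i) + x) '' K)) →
      ‖v (i + 1)‖ ^ 2 ≤ ‖v i‖ ^ 2 - ε ^ 2) :
    ∃ N : ℕ, (N : ℝ) ≤ ⌈1 / ε ^ 2⌉₊ ∧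
      ∀ P ∈ (fun x => w + x) '' K, Metric.infDist P ((fun x => (w - v N) + x) '' K) ≤ ε := by
  by_contra h
  push_neg at h
  set M := ⌈1 / ε ^ 2⌉₊ with hM
  have key : ∀ n, n ≤ M + 1 → ‖v n‖ ^ 2 ≤ 1 - n * ε ^ 2 := by
    intro n hn
    induction n with
    | zero => simpa using (pow_le_one₀ (norm_nonneg _) hv0 : ‖v 0‖ ^ 2 ≤ 1)
    | succ k ih =>
      have hk : k ≤ M + 1 := Nat.le_of_succ_le hn
      have hkM : (k : ℝ) ≤ M := by exact_mod_cast Nat.lt_succ_iff.mp hn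
      obtain ⟨P, hP, hPd⟩ := h k hkM
      have := hstep k ⟨P, hP, le_of_lt hPd⟩
      have := ih hk
      push_cast
      nlinarith
  have hMceil : (1 : ℝ) / ε ^ 2 ≤ M := Nat.le_ceil _
  have h0 := key (M + 1) le_rfl
  have hε2 : 0 < ε ^ 2 := by positivity
  have : (0 : ℝ) ≤ ‖v (M + 1)‖ ^ 2 := sq_nonneg _
  have h1 : ((M : ℝ) + 1) * ε ^ 2 ≤ 1 := by push_cast at h0 ⊢; nlinarith
  have h2 : 1 / ε ^ 2 * ε ^ 2 = 1 := by
    field_simp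
  nlinarith [mul_le_mul_of_nonneg_right hMceil (le_of_lt hε2)]
end

section
/- Let S be a finite set of points in ℝ^d, X ∈ S, and Y ∈ S a point of S farthest from X. Suppose every point of S is within distance 1 of some line ℓ (i.e., S is contained in the infinite cylinder of radius 1 around ℓ). Then every point of S is within distance 4 of the line ℓ₀ through X and Y. -/
/-!
Write each point of `S` as `a + t • u + e` with `e ⟂ u` and `‖e‖ ≤ 1`, so that
`Y - X = α • u + f` and `Z - X = β • u + g` with `f, g ⟂ u` of norm at most `2`.
If `‖Y - X‖ ≤ 4` the point `X` of `ℓ₀` is close enough to `Z`. Otherwise the axial part of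
`Y - X` has squared length `α² ‖u‖² > 12`, and the point `X + (β / α) • (Y - X)` of `ℓ₀`
differs from `Z` by `g - (β / α) • f`. As `‖Z - X‖ ≤ ‖Y - X‖` bounds `|β / α|` in terms of
`‖f‖` and `‖g‖`, an elementary inequality shows that this vector has norm at most `4`.
-/

open Metric Set RealInnerProductSpace

theorem add_mul_le_four_mul {A B s K r : ℝ} (hA0 : 0 ≤ A) (hA : A ≤ 2 * r) (hB0 : 0 ≤ B)
    (hB : B ≤ 2 * r) (hK : 12 * r ^ 2 < K) (h : s ^ 2 * K + B ^ 2 ≤ K + A ^ 2) :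
    B + s * A ≤ 4 * r := by
  have hK0 : 0 < K := by nlinarith
  have hA4 : 0 ≤ 4 * r ^ 2 - A ^ 2 := by nlinarith
  -- The difference of the two sides equals `(K - 12r²)((4r - B)² - A²)`
  -- `+ (4r² - A²)(4r² + A² - B²) + 16r²(2r - B)(4r - B) + 12r²(4r² - A²)`.
  have key : (K + A ^ 2 - B ^ 2) * A ^ 2 ≤ (4 * r - B) ^ 2 * K := by
    linarith [mul_nonneg (sub_nonneg.2 hK.le) (by nlinarith : 0 ≤ (4 * r - B) ^ 2 - A ^ 2),
      mul_nonneg hA4 (by nlinarith : 0 ≤ 4 * r ^ 2 + A ^ 2 - B ^ 2),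
      mul_nonneg (sq_nonneg r)
        (mul_nonneg (by linarith : 0 ≤ 2 * r - B) (by linarith : 0 ≤ 4 * r - B)),
      mul_nonneg (sq_nonneg r) hA4]
  have hsq : (s * A) ^ 2 ≤ (4 * r - B) ^ 2 := by
    refine le_of_mul_le_mul_right ?_ hK0
    nlinarith [sq_nonneg A]
  nlinarith [abs_le_of_sq_le_sq' hsq (by linarith : 0 ≤ 4 * r - B)]

variable {E : Type*} [NormedAddCommGroup E] [InnerProductSpace ℝ E]

theorem norm_smul_add_sq_of_inner_eq_zero {u f : E} (hf : ⟪f, u⟫ = 0) (c : ℝ) :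
    ‖c • u + f‖ ^ 2 = c ^ 2 * ‖u‖ ^ 2 + ‖f‖ ^ 2 := by
  have h : ⟪c • u, f⟫ = 0 := by rw [real_inner_smul_left, real_inner_comm, hf, mul_zero]
  rw [sq, sq, norm_add_sq_eq_norm_sq_add_norm_sq_real h, norm_smul, Real.norm_eq_abs]
  nlinarith [sq_abs c]

theorem norm_le_norm_smul_add_of_inner_eq_zero {u f : E} (hf : ⟪f, u⟫ = 0) (c : ℝ) :
    ‖f‖ ≤ ‖c • u + f‖ := by
  refine le_of_sq_le_sq ?_ (norm_nonneg _)
  rw [norm_smul_add_sq_of_inner_eq_zero hf]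
  nlinarith [sq_nonneg c, sq_nonneg ‖u‖]

theorem exists_eq_add_smul_add_of_infDist_le {a u P : E} {ρ : ℝ}
    (h : infDist P (range fun t : ℝ => a + t • u) ≤ ρ) :
    ∃ (t : ℝ) (e : E), P = a + t • u + e ∧ ⟪e, u⟫ = 0 ∧ ‖e‖ ≤ ρ := by
  set t := ⟪P - a, u⟫ / ‖u‖ ^ 2
  have he : ⟪P - a - t • u, u⟫ = 0 := by
    rw [inner_sub_left, real_inner_smul_left, real_inner_self_eq_norm_sq, sub_eq_zero,
      div_mul_cancel_of_imp]
    intro hu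
    rw [sq_eq_zero_iff, norm_eq_zero] at hu
    rw [hu, inner_zero_right]
  refine ⟨t, P - a - t • u, by abel, he, le_trans ?_ h⟩
  refine (le_infDist (range_nonempty _)).2 ?_
  rintro _ ⟨s, rfl⟩
  calc ‖P - a - t • u‖ ≤ ‖(t - s) • u + (P - a - t • u)‖ :=
        norm_le_norm_smul_add_of_inner_eq_zero he _
    _ = dist P (a + s • u) := by rw [dist_eq_norm, sub_smul]; congr 1; abel

theorem exists_sub_eq_smul_add_of_infDist_le {a u P Q : E} {ρ : ℝ}
    (hP : infDist P (range fun t : ℝ => a + t • u) ≤ ρ)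
    (hQ : infDist Q (range fun t : ℝ => a + t • u) ≤ ρ) :
    ∃ (c : ℝ) (f : E), Q - P = c • u + f ∧ ⟪f, u⟫ = 0 ∧ ‖f‖ ≤ 2 * ρ := by
  obtain ⟨p, e, rfl, he, he1⟩ := exists_eq_add_smul_add_of_infDist_le hP
  obtain ⟨q, e', rfl, he', he1'⟩ := exists_eq_add_smul_add_of_infDist_le hQ
  refine ⟨q - p, e' - e, by rw [sub_smul]; abel, by rw [inner_sub_left, he, he', sub_zero], ?_⟩
  linarith [norm_sub_le e' e]

theorem exists_norm_smul_add_sub_smul_le {u f g : E} {α β r : ℝ} (hf : ⟪f, u⟫ = 0)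
    (hg : ⟪g, u⟫ = 0) (hf2 : ‖f‖ ≤ 2 * r) (hg2 : ‖g‖ ≤ 2 * r)
    (hle : ‖β • u + g‖ ≤ ‖α • u + f‖) :
    ∃ k : ℝ, ‖β • u + g - k • (α • u + f)‖ ≤ 4 * r := by
  rcases le_or_gt ‖α • u + f‖ (4 * r) with hv | hv
  · exact ⟨0, by simpa using hle.trans hv⟩
  have hr : 0 ≤ r := by linarith [norm_nonneg f]
  have hsq_le : ‖β • u + g‖ ^ 2 ≤ ‖α • u + f‖ ^ 2 := pow_le_pow_left₀ (norm_nonneg _) hle 2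
  rw [norm_smul_add_sq_of_inner_eq_zero hf, norm_smul_add_sq_of_inner_eq_zero hg] at hsq_le
  have hK : 12 * r ^ 2 < α ^ 2 * ‖u‖ ^ 2 := by
    have h16 : (4 * r) ^ 2 < ‖α • u + f‖ ^ 2 := pow_lt_pow_left₀ hv (by positivity) two_ne_zero
    rw [norm_smul_add_sq_of_inner_eq_zero hf] at h16
    nlinarith [pow_le_pow_left₀ (norm_nonneg f) hf2 2]
  have hα : α ≠ 0 := by
    rintro rfl
    nlinarith
  refine ⟨β / α, ?_⟩
  have hsub : β • u + g - (β / α) • (α • u + f) = g - (β / α) • f := by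
    rw [smul_add, smul_smul, div_mul_cancel₀ _ hα]
    abel
  have hnum : |β / α| ^ 2 * (α ^ 2 * ‖u‖ ^ 2) + ‖g‖ ^ 2 ≤ α ^ 2 * ‖u‖ ^ 2 + ‖f‖ ^ 2 := by
    rwa [sq_abs, ← mul_assoc, ← mul_pow, div_mul_cancel₀ _ hα]
  calc ‖β • u + g - (β / α) • (α • u + f)‖ = ‖g - (β / α) • f‖ := by rw [hsub]
    _ ≤ ‖g‖ + |β / α| * ‖f‖ := by rw [← Real.norm_eq_abs, ← norm_smul]; exact norm_sub_le _ _
    _ ≤ 4 * r := add_mul_le_four_mul (norm_nonneg f) hf2 (norm_nonneg g) hg2 hK hnum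

theorem mincyn_init_general (d : ℕ) (S : Finset (EuclideanSpace ℝ (Fin d)))
    (X Y : EuclideanSpace ℝ (Fin d)) (hX : X ∈ S) (hY : Y ∈ S)
    (hfar : ∀ Z ∈ S, dist X Z ≤ dist X Y)
    (a u : EuclideanSpace ℝ (Fin d))
    (hcyl : ∀ Z ∈ S, Metric.infDist Z (Set.range fun t : ℝ => a + t • u) ≤ 1) :
    ∀ Z ∈ S, Metric.infDist Z (Set.range fun t : ℝ => X + t • (Y - X)) ≤ 4 := by
  intro Z hZ
  obtain ⟨α, f, hv, hf, hf2⟩ := exists_sub_eq_smul_add_of_infDist_le (hcyl X hX) (hcyl Y hY)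
  obtain ⟨β, g, hw, hg, hg2⟩ := exists_sub_eq_smul_add_of_infDist_le (hcyl X hX) (hcyl Z hZ)
  have hle : ‖Z - X‖ ≤ ‖Y - X‖ := by simpa only [dist_comm X, dist_eq_norm] using hfar Z hZ
  rw [hv, hw] at hle
  obtain ⟨k, hk⟩ := exists_norm_smul_add_sub_smul_le hf hg hf2 hg2 hle
  calc infDist Z (range fun t : ℝ => X + t • (Y - X))
      ≤ dist Z (X + k • (Y - X)) := infDist_le_dist_of_mem ⟨k, rfl⟩
    _ = ‖Z - X - k • (Y - X)‖ := by rw [dist_eq_norm, sub_sub]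
    _ ≤ 4 := by rw [hv, hw]; linarith

theorem mincyn_init (d : ℕ) (S : Finset (EuclideanSpace ℝ (Fin d)))
    (X Y : EuclideanSpace ℝ (Fin d)) (hX : X ∈ S) (hY : Y ∈ S)
    (hfar : ∀ Z ∈ S, dist X Z ≤ dist X Y) (hXY : X ≠ Y)
    (a u : EuclideanSpace ℝ (Fin d))
    (hcyl : ∀ Z ∈ S, Metric.infDist Z (Set.range fun t : ℝ => a + t • u) ≤ 1) :
    ∀ Z ∈ S, Metric.infDist Z (Set.range fun t : ℝ => X + t • (Y - X)) ≤ 4 :=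
  mincyn_init_general d S X Y hX hY hfar a u hcyl
end
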